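/- arXiv:2410.18865 — 5 statements merged into one kernel-verified Lean document; each statement's English description precedes it below -/
import Mathlib

section
/- With notation as before, the condition "n_x(α+β) ≤ max{n_x(α), n_x(β)} for all α, β ∈ Φ⁺ with α+β ∈ Φ⁺" is equivalent to the condition "n_x(α+β) ≤ n_x(β) for all α ∈ Φ⁺ with x(α) ∈ Φ⁻ and all β ∈ Φ⁺ with α+β ∈ Φ⁺". -/
/-- minimal `i ≥ 1` with `(x^i) γ ∈ Φneg` (or `0` if none exists). -/
noncomputable def nx {V : Type*} [AddCommGroup V] [Module ℝ V]
    (x : V ≃ₗ[ℝ] V) (Φneg : Set V) (γ : V) : ℕ :=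
  sInf {i : ℕ | 1 ≤ i ∧ (x ^ i) γ ∈ Φneg}

/-- `Φ(x)`: the roots whose sign is preserved by all powers of `x`. -/
def PhiX {V : Type*} [AddCommGroup V] [Module ℝ V]
    (x : V ≃ₗ[ℝ] V) (Φpos : Set V) : Set V :=
  {γ ∈ Φpos ∪ -Φpos | ∀ i : ℤ, ((x ^ i) γ ∈ Φpos ↔ γ ∈ Φpos)}

section Aux
variable {V : Type*} [AddCommGroup V] [Module ℝ V] (Φpos : Set V) (x : V ≃ₗ[ℝ] V)

lemma aux_mul_apply (f g : V ≃ₗ[ℝ] V) (v : V) : (f * g) v = f (g v) := rfl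

lemma aux_succ_apply (j : ℕ) (γ : V) : (x ^ j) (x γ) = (x ^ (j + 1)) γ := by
  rw [pow_succ]; rfl

lemma aux_mem_U (hx : x '' (Φpos ∪ -Φpos) = Φpos ∪ -Φpos) {γ : V}
    (hγ : γ ∈ Φpos ∪ -Φpos) (i : ℕ) : (x ^ i) γ ∈ Φpos ∪ -Φpos := by
  induction i with
  | zero => simpa using hγ
  | succ n ih =>
      have h : x ((x ^ n) γ) ∈ x '' (Φpos ∪ -Φpos) := ⟨_, ih, rfl⟩
      rw [hx] at h
      rw [pow_succ']
      simpa [aux_mul_apply] using h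

lemma aux_zpow_eq (m : ℕ) (hm1 : 1 ≤ m) (hm : x ^ m = 1) (i : ℤ) :
    x ^ i = x ^ (i % (m : ℤ)).toNat := by
  have hm0 : (m : ℤ) ≠ 0 := by exact_mod_cast Nat.one_le_iff_ne_zero.mp hm1
  have h0 : 0 ≤ i % (m : ℤ) := Int.emod_nonneg i hm0
  calc x ^ i = x ^ (i % (m : ℤ) + (m : ℤ) * (i / (m : ℤ))) := by rw [Int.emod_add_mul_ediv]
    _ = x ^ (i % (m : ℤ)) * (x ^ (m : ℤ)) ^ (i / (m : ℤ)) := by rw [zpow_add, zpow_mul]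
    _ = x ^ (i % (m : ℤ)) := by rw [zpow_natCast, hm, one_zpow, mul_one]
    _ = x ^ (i % (m : ℤ)).toNat := by rw [← zpow_natCast, Int.toNat_of_nonneg h0]

lemma aux_exists (hx : x '' (Φpos ∪ -Φpos) = Φpos ∪ -Φpos)
    (hord : ∃ m : ℕ, 1 ≤ m ∧ x ^ m = 1) {γ : V}
    (hγ : γ ∈ Φpos) (h : γ ∉ PhiX x Φpos) :
    ∃ j : ℕ, 1 ≤ j ∧ (x ^ j) γ ∈ -Φpos := by
  obtain ⟨m, hm1, hm⟩ := hord
  have hU : γ ∈ Φpos ∪ -Φpos := Or.inl hγ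
  simp only [PhiX, Set.mem_setOf_eq, not_and, not_forall] at h
  obtain ⟨i, hi⟩ := h hU
  set j := (i % (m : ℤ)).toNat with hj
  have hij : x ^ i = x ^ j := aux_zpow_eq x m hm1 hm i
  have hnotpos : (x ^ j) γ ∉ Φpos := by
    intro hp
    apply hi
    rw [hij]
    exact ⟨fun _ => hγ, fun _ => hp⟩
  have hj1 : 1 ≤ j := by
    by_contra hc
    have : j = 0 := by omega
    rw [this] at hnotpos
    simp at hnotpos
    exact hnotpos hγ
  refine ⟨j, hj1, ?_⟩
  exact (aux_mem_U Φpos x hx hU j).resolve_left hnotpos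

lemma aux_notPhiX (hdisj : Disjoint Φpos (-Φpos)) {γ : V}
    (hγ : γ ∈ Φpos) {j : ℕ} (hmem : (x ^ j) γ ∈ -Φpos) : γ ∉ PhiX x Φpos := by
  intro hP
  have h := (hP.2 (j : ℤ)).mpr hγ
  rw [zpow_natCast] at h
  exact Set.disjoint_left.mp hdisj h hmem

lemma aux_nx_mem (Φneg : Set V) {γ : V} (h : ∃ j : ℕ, 1 ≤ j ∧ (x ^ j) γ ∈ Φneg) :
    1 ≤ nx x Φneg γ ∧ (x ^ (nx x Φneg γ)) γ ∈ Φneg :=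
  Nat.sInf_mem (h : Set.Nonempty {i : ℕ | 1 ≤ i ∧ (x ^ i) γ ∈ Φneg})

lemma aux_shift (hdisj : Disjoint Φpos (-Φpos))
    (hx : x '' (Φpos ∪ -Φpos) = Φpos ∪ -Φpos) {γ : V}
    (hγU : γ ∈ Φpos ∪ -Φpos)
    (hS : ∃ j : ℕ, 1 ≤ j ∧ (x ^ j) γ ∈ -Φpos)
    (h2 : 2 ≤ nx x (-Φpos) γ) :
    x γ ∈ Φpos ∧ nx x (-Φpos) (x γ) = nx x (-Φpos) γ - 1 := by
  set n := nx x (-Φpos) γ with hn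
  have hSne : {i : ℕ | 1 ≤ i ∧ (x ^ i) γ ∈ -Φpos}.Nonempty := hS
  have hmem := Nat.sInf_mem hSne
  have hnot1 : (x ^ 1) γ ∉ -Φpos := by
    intro hc
    have : n ≤ 1 := Nat.sInf_le ⟨le_refl 1, hc⟩
    omega
  have hxγU : x γ ∈ Φpos ∪ -Φpos := by
    have := aux_mem_U Φpos x hx hγU 1
    rwa [pow_one] at this
  have hxγ : x γ ∈ Φpos := by
    rw [pow_one] at hnot1; exact hxγU.resolve_right hnot1
  refine ⟨hxγ, ?_⟩
  have hkey : ∀ j : ℕ, (x ^ j) (x γ) = (x ^ (j + 1)) γ := fun j => aux_succ_apply x j γ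
  have hmem' : (n - 1) ∈ {i : ℕ | 1 ≤ i ∧ (x ^ i) (x γ) ∈ -Φpos} := by
    constructor
    · omega
    · rw [hkey]
      have : n - 1 + 1 = n := by omega
      rw [this]
      exact hmem.2
  have hle : nx x (-Φpos) (x γ) ≤ n - 1 := Nat.sInf_le hmem'
  have hmem2 := Nat.sInf_mem ⟨n - 1, hmem'⟩
  have hge : n ≤ nx x (-Φpos) (x γ) + 1 := by
    apply Nat.sInf_le
    refine ⟨by omega, ?_⟩
    rw [← hkey]
    exact hmem2.2
  omega

end Aux

/-- the condition `n_x(α+β) ≤ max {n_x α, n_x β}` for all positive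
roots `α, β` (not in `Φ(x)`) with `α+β` a positive root is equivalent to the
condition `n_x(α+β) ≤ n_x β` for all `α ∈ Φ⁺` with `x α ∈ Φ⁻` and all
`β ∈ Φ⁺ \ Φ(x)` with `α + β ∈ Φ⁺`. -/
theorem convexIneq_iff {V : Type*} [AddCommGroup V] [Module ℝ V]
    (Φpos : Set V) (x : V ≃ₗ[ℝ] V)
    (hdisj : Disjoint Φpos (-Φpos))
    (hx : x '' (Φpos ∪ -Φpos) = Φpos ∪ -Φpos)
    (hord : ∃ m : ℕ, 1 ≤ m ∧ x ^ m = 1)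
    (hclosed : ∀ a ∈ Φpos, ∀ b ∈ Φpos, a + b ∈ Φpos ∪ -Φpos → a + b ∈ Φpos) :
    (∀ α ∈ Φpos \ PhiX x Φpos, ∀ β ∈ Φpos \ PhiX x Φpos,
        α + β ∈ Φpos → α + β ∉ PhiX x Φpos →
        nx x (-Φpos) (α + β) ≤ max (nx x (-Φpos) α) (nx x (-Φpos) β)) ↔
    (∀ α ∈ Φpos, x α ∈ -Φpos → ∀ β ∈ Φpos \ PhiX x Φpos,
        α + β ∈ Φpos → α + β ∉ PhiX x Φpos →
        nx x (-Φpos) (α + β) ≤ nx x (-Φpos) β) := by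
  have hpos : ∀ γ ∈ Φpos, γ ∉ PhiX x Φpos → 1 ≤ nx x (-Φpos) γ := by
    intro γ hγ hP
    obtain ⟨j, hj⟩ := aux_exists Φpos x hx hord hγ hP
    exact (aux_nx_mem x (-Φpos) ⟨j, hj⟩).1
  constructor
  · -- forward
    intro H α hα hxα β hβ hsum hsumP
    have hα1 : (x ^ 1) α ∈ -Φpos := by rwa [pow_one]
    have hαP : α ∉ PhiX x Φpos := aux_notPhiX Φpos x hdisj hα hα1
    have hnα : nx x (-Φpos) α = 1 := by
      have h1 : nx x (-Φpos) α ≤ 1 := Nat.sInf_le ⟨le_refl 1, hα1⟩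
      have := hpos α hα hαP
      omega
    have hβ1 := hpos β hβ.1 hβ.2
    have := H α ⟨hα, hαP⟩ β hβ hsum hsumP
    rw [hnα] at this
    omega
  · -- backward
    intro H
    have key : ∀ N : ℕ, ∀ α ∈ Φpos \ PhiX x Φpos, ∀ β ∈ Φpos \ PhiX x Φpos,
        α + β ∈ Φpos → α + β ∉ PhiX x Φpos →
        nx x (-Φpos) α + nx x (-Φpos) β ≤ N →
        nx x (-Φpos) (α + β) ≤ max (nx x (-Φpos) α) (nx x (-Φpos) β) := by
      intro N
      induction N using Nat.strong_induction_on with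
      | _ N ih =>
        intro α hα β hβ hsum hsumP hN
        have hSα := aux_exists Φpos x hx hord hα.1 hα.2
        have hSβ := aux_exists Φpos x hx hord hβ.1 hβ.2
        have hSs := aux_exists Φpos x hx hord hsum hsumP
        have hα1 := hpos α hα.1 hα.2
        have hβ1 := hpos β hβ.1 hβ.2
        have hs1 := hpos _ hsum hsumP
        by_cases hcα : nx x (-Φpos) α = 1
        · -- x α ∈ -Φpos
          have hxα : x α ∈ -Φpos := by
            have h2 := (aux_nx_mem x (-Φpos) hSα).2
            rwa [hcα, pow_one] at h2
          have := H α hα.1 hxα β hβ hsum hsumP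
          omega
        by_cases hcβ : nx x (-Φpos) β = 1
        · have hxβ : x β ∈ -Φpos := by
            have h2 := (aux_nx_mem x (-Φpos) hSβ).2
            rwa [hcβ, pow_one] at h2
          have hsum2 : β + α ∈ Φpos := by rwa [add_comm]
          have hsumP2 : β + α ∉ PhiX x Φpos := by rwa [add_comm]
          have := H β hβ.1 hxβ α hα hsum2 hsumP2
          rw [add_comm β α] at this
          omega
        · -- both ≥ 2
          by_cases hcs : nx x (-Φpos) (α + β) ≤ 1
          · omega
          have h2α : 2 ≤ nx x (-Φpos) α := by omega
          have h2β : 2 ≤ nx x (-Φpos) β := by omega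
          have h2s : 2 ≤ nx x (-Φpos) (α + β) := by omega
          obtain ⟨hxαpos, hnxα⟩ := aux_shift Φpos x hdisj hx (Or.inl hα.1) hSα h2α
          obtain ⟨hxβpos, hnxβ⟩ := aux_shift Φpos x hdisj hx (Or.inl hβ.1) hSβ h2β
          obtain ⟨hxspos, hnxs⟩ := aux_shift Φpos x hdisj hx (Or.inl hsum) hSs h2s
          have hmap : x (α + β) = x α + x β := map_add x α β
          -- not in PhiX for shifted elements
          have hSα' : ∃ j : ℕ, 1 ≤ j ∧ (x ^ j) (x α) ∈ -Φpos := by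
            have hmem := aux_nx_mem x (-Φpos) hSα
            refine ⟨nx x (-Φpos) α - 1, by omega, ?_⟩
            rw [aux_succ_apply, show nx x (-Φpos) α - 1 + 1 = nx x (-Φpos) α from by omega]
            exact hmem.2
          have hSβ' : ∃ j : ℕ, 1 ≤ j ∧ (x ^ j) (x β) ∈ -Φpos := by
            have hmem := aux_nx_mem x (-Φpos) hSβ
            refine ⟨nx x (-Φpos) β - 1, by omega, ?_⟩
            rw [aux_succ_apply, show nx x (-Φpos) β - 1 + 1 = nx x (-Φpos) β from by omega]
            exact hmem.2
          have hSs' : ∃ j : ℕ, 1 ≤ j ∧ (x ^ j) (x (α + β)) ∈ -Φpos := by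
            have hmem := aux_nx_mem x (-Φpos) hSs
            refine ⟨nx x (-Φpos) (α + β) - 1, by omega, ?_⟩
            rw [aux_succ_apply, show nx x (-Φpos) (α+β) - 1 + 1 = nx x (-Φpos) (α+β) from by omega]
            exact hmem.2
          have hPα' : x α ∉ PhiX x Φpos := by
            obtain ⟨j, hj1, hj2⟩ := hSα'
            exact aux_notPhiX Φpos x hdisj hxαpos hj2
          have hPβ' : x β ∉ PhiX x Φpos := by
            obtain ⟨j, hj1, hj2⟩ := hSβ'
            exact aux_notPhiX Φpos x hdisj hxβpos hj2
          have hsum' : x α + x β ∈ Φpos := hmap ▸ hxspos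
          have hPs' : x α + x β ∉ PhiX x Φpos := by
            obtain ⟨j, hj1, hj2⟩ := hSs'
            rw [hmap] at hj2
            exact aux_notPhiX Φpos x hdisj hsum' hj2
          have := ih (N - 1) (by omega) (x α) ⟨hxαpos, hPα'⟩ (x β) ⟨hxβpos, hPβ'⟩
            hsum' hPs' (by omega)
          rw [← hmap] at this
          rw [hnxα, hnxβ, hnxs] at this
          omega
    intro α hα β hβ hsum hsumP
    exact key _ α hα β hβ hsum hsumP le_rfl
end

section
/- Let x be an elliptic element of a finite (twisted) Weyl group, i.e., x has finite order and fixes no nonzero vector of the ambient Euclidean space V. Then Φ(x) = ∅; that is, for every root γ there exist integers i, j with x^i(γ) ∈ Φ⁺ and x^j(γ) ∈ Φ⁻. -/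
/-- if `x` is an elliptic element of finite order (no nonzero
fixed vector), then `Φ(x) = ∅`: every root `γ` has both a positive and a
negative element in its `x`-orbit. -/
theorem elliptic_phiX_empty {V : Type*} [AddCommGroup V] [Module ℝ V]
    (Φpos : Set V) (x : V ≃ₗ[ℝ] V)
    (hdisj : Disjoint Φpos (-Φpos))
    (hx : x '' (Φpos ∪ -Φpos) = Φpos ∪ -Φpos)
    -- `x` has finite order
    (hord : ∃ m : ℕ, 1 ≤ m ∧ x ^ m = 1)
    -- positivity is cut out by a linear functional (a regular covector)
    (hf : ∃ f : V →ₗ[ℝ] ℝ, ∀ γ ∈ Φpos ∪ -Φpos, (γ ∈ Φpos ↔ 0 < f γ))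
    -- `x` is elliptic: it fixes no nonzero vector
    (hell : ∀ v : V, x v = v → v = 0) :
    ∀ γ ∈ Φpos ∪ -Φpos,
      (∃ i : ℤ, (x ^ i) γ ∈ Φpos) ∧ (∃ j : ℤ, (x ^ j) γ ∈ -Φpos) := by
  obtain ⟨m, hm1, hmx⟩ := hord
  obtain ⟨f, hfp⟩ := hf
  set S : Set V := Φpos ∪ -Φpos with hS
  -- S is stable under x
  have hstab : ∀ δ ∈ S, x δ ∈ S := by
    intro δ hδ
    rw [← hx]
    exact ⟨δ, hδ, rfl⟩
  have hiter : ∀ n : ℕ, ∀ δ ∈ S, (x ^ n) δ ∈ S := by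
    intro n
    induction n with
    | zero => intro δ hδ; simpa using hδ
    | succ k ih =>
        intro δ hδ
        have h : (x ^ (k + 1)) δ = x ((x ^ k) δ) := by
          rw [pow_succ']; rfl
        rw [h]
        exact hstab _ (ih δ hδ)
  -- sign of f on S
  have hpos : ∀ δ ∈ S, δ ∈ Φpos → 0 < f δ := fun δ hδ h => (hfp δ hδ).1 h
  have hneg : ∀ δ : V, δ ∈ -Φpos → f δ < 0 := by
    intro δ hδ
    have h1 : -δ ∈ Φpos := Set.mem_neg.mp hδ
    have h2 : 0 < f (-δ) := (hfp (-δ) (Or.inl h1)).1 h1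
    rw [map_neg] at h2
    linarith
  intro γ hγ
  -- the orbit sum is fixed by x, hence zero
  have hfix : (x ^ m) γ = γ := by rw [hmx]; rfl
  have hsum0 : (∑ i ∈ Finset.range m, (x ^ i) γ) = 0 := by
    set g : ℕ → V := fun i => (x ^ i) γ with hg
    have hstep : ∀ i, g (i + 1) = x (g i) := by
      intro i; simp only [hg, pow_succ']; rfl
    have e1 : ∑ i ∈ Finset.range (m + 1), g i
        = (∑ i ∈ Finset.range m, g (i + 1)) + g 0 := Finset.sum_range_succ' g m
    have e2 : ∑ i ∈ Finset.range (m + 1), g i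
        = (∑ i ∈ Finset.range m, g i) + g m := Finset.sum_range_succ g m
    have egm : g m = g 0 := by simpa [hg] using hfix
    have e3 : ∑ i ∈ Finset.range m, g (i + 1) = ∑ i ∈ Finset.range m, g i := by
      have h := e1.symm.trans e2
      rw [egm] at h
      exact add_right_cancel h
    apply hell
    rw [map_sum]
    calc ∑ i ∈ Finset.range m, x (g i)
        = ∑ i ∈ Finset.range m, g (i + 1) := by
          exact Finset.sum_congr rfl fun i _ => (hstep i).symm
      _ = ∑ i ∈ Finset.range m, g i := e3
  have hne : (Finset.range m).Nonempty := Finset.nonempty_range_iff.mpr (by omega)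
  have hf0 : f (∑ i ∈ Finset.range m, (x ^ i) γ) = 0 := by rw [hsum0, map_zero]
  rw [map_sum] at hf0
  -- some iterate is positive
  have hexp : ∃ n : ℕ, (x ^ n) γ ∈ Φpos := by
    by_contra hcon
    push_neg at hcon
    have hall : ∀ i ∈ Finset.range m, f ((x ^ i) γ) < 0 := by
      intro i _
      have hmem : (x ^ i) γ ∈ S := hiter i γ hγ
      rcases hmem with h | h
      · exact absurd h (hcon i)
      · exact hneg _ h
    have := Finset.sum_neg hall hne
    linarith
  -- some iterate is negative
  have hexn : ∃ n : ℕ, (x ^ n) γ ∈ -Φpos := by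
    by_contra hcon
    push_neg at hcon
    have hall : ∀ i ∈ Finset.range m, 0 < f ((x ^ i) γ) := by
      intro i _
      have hmem : (x ^ i) γ ∈ S := hiter i γ hγ
      rcases hmem with h | h
      · exact hpos _ (hiter i γ hγ) h
      · exact absurd h (hcon i)
    have := Finset.sum_pos hall hne
    linarith
  obtain ⟨n₁, h₁⟩ := hexp
  obtain ⟨n₂, h₂⟩ := hexn
  refine ⟨⟨(n₁ : ℤ), ?_⟩, ⟨(n₂ : ℤ), ?_⟩⟩
  · rw [zpow_natCast]; exact h₁
  · rw [zpow_natCast]; exact h₂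
end

section
/- In the Weyl group of type A₄ (symmetric group S₅ acting on roots α_{ij} = e_i − e_j), the element x = s₁s₂s₃s₄s₁s₂ is quasi-convex but its inverse is not quasi-convex: specifically n_{x^{-1}}(α_{23}) = 1, n_{x^{-1}}(α_{35}) = 2, but n_{x^{-1}}(α_{25}) = 3, violating the convexity inequality since α_{25} = α_{23} + α_{35}. -/
/-- For a permutation `x` of `{0, …, m-1}` (Weyl group of type `A_{m-1}`) and a
positive root `e_i - e_j` (`i < j`), the minimal `k ≥ 1` with
`x^k (e_i - e_j)` negative. -/
noncomputable def nA {m : ℕ} (x : Equiv.Perm (Fin m)) (i j : Fin m) : ℕ :=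
  sInf {k : ℕ | 1 ≤ k ∧ (x ^ k) j < (x ^ k) i}

/-- `Φ(x)` in the type `A` model: pairs `(i, j)` (the root `e_i - e_j`) whose
sign is preserved by all powers of `x`. -/
def PhiXA {m : ℕ} (x : Equiv.Perm (Fin m)) : Set (Fin m × Fin m) :=
  {p | p.1 ≠ p.2 ∧ ∀ k : ℤ, ((x ^ k) p.1 < (x ^ k) p.2 ↔ p.1 < p.2)}

/-- the root `e_{p.1} - e_{p.2}` lies in `ℤJ` for a set `J` of simple roots
`α_l = e_l - e_{l+1}`. -/
def InZJ {m : ℕ} (J : Set ℕ) (p : Fin m × Fin m) : Prop :=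
  ∀ l : ℕ, min p.1.val p.2.val ≤ l → l < max p.1.val p.2.val → l ∈ J

/-- quasi-convexity in the type `A` model: `Φ(x)` is a standard parabolic root
subsystem and `n_x(α+β) ≤ max (n_x α) (n_x β)` for positive roots with
positive sum. -/
noncomputable def QuasiConvexA {m : ℕ} (x : Equiv.Perm (Fin m)) : Prop :=
  (∃ J : Set ℕ, PhiXA x = {p | p.1 ≠ p.2 ∧ InZJ J p}) ∧
  ∀ i j k : Fin m, i < j → j < k →
    (i, j) ∉ PhiXA x → (j, k) ∉ PhiXA x → (i, k) ∉ PhiXA x →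
    nA x i k ≤ max (nA x i j) (nA x j k)

/-- the specific element `s₁s₂s₃s₄s₁s₂`. -/
def xA4 : Equiv.Perm (Fin 5) :=
  Equiv.swap 0 1 * Equiv.swap 1 2 * Equiv.swap 2 3 * Equiv.swap 3 4 *
    Equiv.swap 0 1 * Equiv.swap 1 2

lemma nA_eq {m : ℕ} (x : Equiv.Perm (Fin m)) (i j : Fin m) (n : ℕ) (h1 : 1 ≤ n)
    (h2 : (x ^ n) j < (x ^ n) i)
    (h3 : ∀ k, 1 ≤ k → k < n → ¬ (x ^ k) j < (x ^ k) i) : nA x i j = n :=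
  le_antisymm (Nat.sInf_le ⟨h1, h2⟩)
    (le_csInf ⟨n, h1, h2⟩ fun k hk => not_lt.1 fun hlt => h3 k hk.1 hlt hk.2)

lemma not_mem_PhiXA {m : ℕ} (x : Equiv.Perm (Fin m)) (p : Fin m × Fin m) (k : ℕ)
    (h : ¬ (((x ^ k) p.1 < (x ^ k) p.2) ↔ p.1 < p.2)) : p ∉ PhiXA x := fun hp =>
  h (by simpa [zpow_natCast] using hp.2 (k : ℤ))

lemma PhiXA_xA4_empty : ∀ p : Fin 5 × Fin 5, p ∉ PhiXA xA4 := by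
  have hd : ∀ p : Fin 5 × Fin 5, p.1 = p.2 ∨ ∃ k : Fin 5,
      ¬ (((xA4 ^ (k : ℕ)) p.1 < (xA4 ^ (k : ℕ)) p.2) ↔ p.1 < p.2) := by decide
  intro p hp
  rcases hd p with h | ⟨k, hk⟩
  · exact hp.1 h
  · exact not_mem_PhiXA _ p k hk hp

lemma PhiXA_xA4_eq : PhiXA xA4 = {p : Fin 5 × Fin 5 | p.1 ≠ p.2 ∧ InZJ (∅ : Set ℕ) p} := by
  ext p
  simp only [Set.mem_setOf_eq]
  constructor
  · intro hp; exact absurd hp (PhiXA_xA4_empty p)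
  · rintro ⟨hne, hJ⟩
    have hv : p.1.val ≠ p.2.val := by simpa [Fin.ext_iff] using hne
    have hlt : min p.1.val p.2.val < max p.1.val p.2.val := by omega
    exact absurd (hJ _ le_rfl hlt) (Set.notMem_empty _)

lemma quasiConvex_xA4 : QuasiConvexA xA4 := by
  constructor
  · exact ⟨∅, PhiXA_xA4_eq⟩
  · have h01 : nA xA4 0 1 = 3 := nA_eq _ _ _ 3 (by norm_num) (by decide)
      (by intro k h1 h2; interval_cases k <;> decide)
    have h02 : nA xA4 0 2 = 1 := nA_eq _ _ _ 1 le_rfl (by decide)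
      (by intro k h1 h2; omega)
    have h03 : nA xA4 0 3 = 2 := nA_eq _ _ _ 2 (by norm_num) (by decide)
      (by intro k h1 h2; interval_cases k <;> decide)
    have h04 : nA xA4 0 4 = 1 := nA_eq _ _ _ 1 le_rfl (by decide)
      (by intro k h1 h2; omega)
    have h12 : nA xA4 1 2 = 1 := nA_eq _ _ _ 1 le_rfl (by decide)
      (by intro k h1 h2; omega)
    have h13 : nA xA4 1 3 = 2 := nA_eq _ _ _ 2 (by norm_num) (by decide)
      (by intro k h1 h2; interval_cases k <;> decide)
    have h14 : nA xA4 1 4 = 1 := nA_eq _ _ _ 1 le_rfl (by decide)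
      (by intro k h1 h2; omega)
    have h23 : nA xA4 2 3 = 2 := nA_eq _ _ _ 2 (by norm_num) (by decide)
      (by intro k h1 h2; interval_cases k <;> decide)
    have h24 : nA xA4 2 4 = 1 := nA_eq _ _ _ 1 le_rfl (by decide)
      (by intro k h1 h2; omega)
    have h34 : nA xA4 3 4 = 1 := nA_eq _ _ _ 1 le_rfl (by decide)
      (by intro k h1 h2; omega)
    intro i j k hij hjk _ _ _
    fin_cases i <;> fin_cases j <;> fin_cases k <;>
      simp_all <;> omega

lemma n12 : nA xA4⁻¹ 1 2 = 1 := nA_eq _ _ _ 1 le_rfl (by decide) (by intro k h1 h2; omega)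

lemma n24 : nA xA4⁻¹ 2 4 = 2 := nA_eq _ _ _ 2 (by norm_num) (by decide)
  (by intro k h1 h2; interval_cases k <;> decide)

lemma n14 : nA xA4⁻¹ 1 4 = 3 := nA_eq _ _ _ 3 (by norm_num) (by decide)
  (by intro k h1 h2; interval_cases k <;> decide)

lemma nm12 : ((1 : Fin 5), (2 : Fin 5)) ∉ PhiXA xA4⁻¹ := not_mem_PhiXA _ _ 1 (by decide)
lemma nm24 : ((2 : Fin 5), (4 : Fin 5)) ∉ PhiXA xA4⁻¹ := not_mem_PhiXA _ _ 2 (by decide)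
lemma nm14 : ((1 : Fin 5), (4 : Fin 5)) ∉ PhiXA xA4⁻¹ := not_mem_PhiXA _ _ 3 (by decide)

lemma not_quasiConvex_inv : ¬ QuasiConvexA xA4⁻¹ := by
  rintro ⟨-, h⟩
  have := h 1 2 4 (by decide) (by decide) nm12 nm24 nm14
  rw [n14, n12, n24] at this
  omega

/-- in type `A₄`, `x = s₁s₂s₃s₄s₁s₂` is quasi-convex but `x⁻¹`
is not: `n_{x⁻¹}(α₂₃) = 1`, `n_{x⁻¹}(α₃₅) = 2`, `n_{x⁻¹}(α₂₅) = 3`. -/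
theorem a4_quasiconvex_not_inverse :
    let x : Equiv.Perm (Fin 5) :=
      Equiv.swap 0 1 * Equiv.swap 1 2 * Equiv.swap 2 3 * Equiv.swap 3 4 *
        Equiv.swap 0 1 * Equiv.swap 1 2
    QuasiConvexA x ∧
      nA x⁻¹ 1 2 = 1 ∧ nA x⁻¹ 2 4 = 2 ∧ nA x⁻¹ 1 4 = 3 ∧
      ¬ (nA x⁻¹ 1 4 ≤ max (nA x⁻¹ 1 2) (nA x⁻¹ 2 4)) ∧
      ¬ QuasiConvexA x⁻¹ := by
  intro x
  refine ⟨quasiConvex_xA4, n12, n24, n14, ?_, not_quasiConvex_inv⟩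
  show ¬ (nA xA4⁻¹ 1 4 ≤ max (nA xA4⁻¹ 1 2) (nA xA4⁻¹ 2 4))
  rw [n14, n12, n24]; omega
end

section
/- In type A₃ (W = S₄), the element x = s₂s₁s₃ satisfies: V_x^π = {(a,−a,−a,a) : a ∈ ℝ}, V_x^{π/2} = {(a,b,−b,−a) : a,b ∈ ℝ}, and V = V_x^{π/2} ⊕ V_x^π; moreover x is at good position with respect to the sequence (π/2, π) but not with respect to (π, π/2). -/
open Pointwise

/-- `V_x^θ` inside the reflection representation (sum-zero vectors of `ℝ⁴`)
for a permutation `x ∈ S₄` acting by permuting coordinates. -/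
noncomputable def Vth (x : Equiv.Perm (Fin 4)) (θ : ℝ) : Set (Fin 4 → ℝ) :=
  {v | (∑ i, v i) = 0 ∧
    (fun i => v (x.symm i)) + (fun i => v (x i)) = (2 * Real.cos θ) • v}

/-- membership in the closed dominant chamber of type `A₃`. -/
def Dom (e : Fin 4 → ℝ) : Prop := ∀ a b : Fin 4, a ≤ b → e b ≤ e a

/-- `e` is a `Φ`-regular point of the subset `S`: `e ∈ S` and every root
hyperplane `{v | v a = v b}` through `e` contains all of `S`. -/
def Reg (S : Set (Fin 4 → ℝ)) (e : Fin 4 → ℝ) : Prop :=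
  e ∈ S ∧ ∀ a b : Fin 4, e a = e b → ∀ v ∈ S, v a = v b

/-- good position with respect to the sequence `(θ₁, θ₂)`. -/
noncomputable def GoodPos2 (x : Equiv.Perm (Fin 4)) (θ₁ θ₂ : ℝ) : Prop :=
  (∃ e, Dom e ∧ Reg (Vth x θ₁) e) ∧
  (∃ e, Dom e ∧ Reg (Vth x θ₁ + Vth x θ₂) e)

/-!
The element `x = s₂s₁s₃` is a 4-cycle, so on the sum-zero hyperplane `x + x⁻¹` has eigenvalue
`-2` on the line spanned by `(1,-1,-1,1)` and `0` on its orthogonal complement `(a,b,-b,-a)`.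
The point `(2,1,-1,-2)` of `V_x^{π/2}` is strictly decreasing, hence dominant and on no root
hyperplane at all. The line `V_x^π` meets the dominant chamber only in `0`, which lies on every
root hyperplane while `(1,-1,-1,1)` does not.
-/

open Real

lemma dom_iff_antitone {e : Fin 4 → ℝ} : Dom e ↔ Antitone e :=
  ⟨fun h a b => h a b, fun h a b => @h a b⟩

lemma reg_of_injective {S : Set (Fin 4 → ℝ)} {e : Fin 4 → ℝ} (he : e ∈ S)
    (hinj : Function.Injective e) : Reg S e :=
  ⟨he, fun _ _ hab _ _ => congrArg _ (hinj hab)⟩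

lemma dom_and_reg_of_strictAnti {S : Set (Fin 4 → ℝ)} {e : Fin 4 → ℝ} (he : e ∈ S)
    (hanti : StrictAnti e) : Dom e ∧ Reg S e :=
  ⟨dom_iff_antitone.2 hanti.antitone, reg_of_injective he hanti.injective⟩

lemma mem_Vth_iff {x : Equiv.Perm (Fin 4)} {θ : ℝ} {v : Fin 4 → ℝ} :
    v ∈ Vth x θ ↔ ∑ i, v i = 0 ∧ ∀ i, v (x.symm i) + v (x i) = 2 * cos θ * v i := by
  simp [Vth, funext_iff]

lemma zero_mem_Vth (x : Equiv.Perm (Fin 4)) (θ : ℝ) : 0 ∈ Vth x θ := by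
  simp [mem_Vth_iff]

-- `s₂s₁s₃` with `s_i = swap (i-1) i` on `Fin 4`; it is the 4-cycle `0 ↦ 2 ↦ 3 ↦ 1 ↦ 0`.
def coxeterElement : Equiv.Perm (Fin 4) := Equiv.swap 1 2 * Equiv.swap 0 1 * Equiv.swap 2 3

lemma mem_Vth_coxeterElement_iff {θ : ℝ} {v : Fin 4 → ℝ} :
    v ∈ Vth coxeterElement θ ↔
      v 0 + v 1 + v 2 + v 3 = 0 ∧ v 1 + v 2 = 2 * cos θ * v 0 ∧ v 3 + v 0 = 2 * cos θ * v 1 ∧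
        v 0 + v 3 = 2 * cos θ * v 2 ∧ v 2 + v 1 = 2 * cos θ * v 3 := by
  rw [mem_Vth_iff, Fin.sum_univ_four, Fin.forall_fin_succ, Fin.forall_fin_succ,
    Fin.forall_fin_succ, Fin.forall_fin_one]
  rfl

lemma Vth_coxeterElement_pi : Vth coxeterElement π = {v | ∃ a : ℝ, v = ![a, -a, -a, a]} := by
  ext v
  simp only [mem_Vth_coxeterElement_iff, cos_pi, Set.mem_ofPred_eq]
  constructor
  · rintro ⟨_, h₀, h₁, h₂, h₃⟩
    exact ⟨v 0, funext fun i => by fin_cases i <;> simp <;> linarith⟩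
  · rintro ⟨a, rfl⟩
    simp only [Matrix.cons_val]
    refine ⟨?_, ?_, ?_, ?_, ?_⟩ <;> ring

lemma Vth_coxeterElement_pi_div_two :
    Vth coxeterElement (π / 2) = {v | ∃ a b : ℝ, v = ![a, b, -b, -a]} := by
  ext v
  simp only [mem_Vth_coxeterElement_iff, cos_pi_div_two, mul_zero, zero_mul, Set.mem_ofPred_eq]
  constructor
  · rintro ⟨_, h₀, h₁, -, -⟩
    exact ⟨v 0, v 1, funext fun i => by fin_cases i <;> simp <;> linarith⟩
  · rintro ⟨a, b, rfl⟩
    simp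

lemma exists_add_of_sum_eq_zero {v : Fin 4 → ℝ} (hv : ∑ i, v i = 0) :
    ∃ u ∈ Vth coxeterElement (π / 2), ∃ w ∈ Vth coxeterElement π, v = u + w := by
  rw [Fin.sum_univ_four] at hv
  rw [Vth_coxeterElement_pi_div_two, Vth_coxeterElement_pi]
  refine ⟨_, ⟨(v 0 - v 3) / 2, (v 1 - v 2) / 2, rfl⟩, _, ⟨(v 0 + v 3) / 2, rfl⟩, ?_⟩
  funext i
  fin_cases i <;> simp <;> linarith

lemma eq_zero_of_mem_Vth_pi_div_two_inter_Vth_pi {v : Fin 4 → ℝ}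
    (hv : v ∈ Vth coxeterElement (π / 2) ∩ Vth coxeterElement π) : v = 0 := by
  rw [Vth_coxeterElement_pi_div_two, Vth_coxeterElement_pi] at hv
  obtain ⟨⟨a, b, rfl⟩, c, hc⟩ := hv
  simp only [Matrix.vecCons_inj] at hc
  obtain ⟨rfl, rfl, hb, -⟩ := hc
  obtain rfl : a = 0 := by linarith
  simp

lemma eq_zero_of_dom_of_mem_Vth_pi {e : Fin 4 → ℝ} (hdom : Dom e)
    (he : e ∈ Vth coxeterElement π) : e = 0 := by
  rw [Vth_coxeterElement_pi] at he
  obtain ⟨a, rfl⟩ := he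
  have h₀₁ := hdom 0 1 (by decide)
  have h₂₃ := hdom 2 3 (by decide)
  simp only [Matrix.cons_val] at h₀₁ h₂₃
  obtain rfl : a = 0 := by linarith
  simp

/-- in type `A₃`, the element `x = s₂s₁s₃` satisfies
`V_x^π = {(a,−a,−a,a)}`, `V_x^{π/2} = {(a,b,−b,−a)}`,
`V = V_x^{π/2} ⊕ V_x^π`, and `x` is at good position with respect to
`(π/2, π)` but not with respect to `(π, π/2)`. -/
theorem a3_good_position :
    let x : Equiv.Perm (Fin 4) := Equiv.swap 1 2 * Equiv.swap 0 1 * Equiv.swap 2 3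
    (Vth x Real.pi = {v | ∃ a : ℝ, v = ![a, -a, -a, a]}) ∧
    (Vth x (Real.pi / 2) = {v | ∃ a b : ℝ, v = ![a, b, -b, -a]}) ∧
    (∀ v : Fin 4 → ℝ, (∑ i, v i) = 0 →
      ∃ u ∈ Vth x (Real.pi / 2), ∃ w ∈ Vth x Real.pi, v = u + w) ∧
    (∀ v ∈ Vth x (Real.pi / 2) ∩ Vth x Real.pi, v = 0) ∧
    GoodPos2 x (Real.pi / 2) Real.pi ∧
    ¬ GoodPos2 x Real.pi (Real.pi / 2) := by
  intro x
  have he : ![2, 1, -1, -2] ∈ Vth coxeterElement (π / 2) := by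
    rw [Vth_coxeterElement_pi_div_two]
    exact ⟨2, 1, rfl⟩
  have he' : ![2, 1, -1, -2] ∈ Vth coxeterElement (π / 2) + Vth coxeterElement π :=
    Set.subset_add_left _ (zero_mem_Vth _ π) he
  have hanti : StrictAnti (![2, 1, -1, -2] : Fin 4 → ℝ) := by
    rw [Fin.strictAnti_iff_succ_lt]
    norm_num [Fin.forall_fin_succ]
  refine ⟨Vth_coxeterElement_pi, Vth_coxeterElement_pi_div_two,
    fun v => exists_add_of_sum_eq_zero, fun v => eq_zero_of_mem_Vth_pi_div_two_inter_Vth_pi,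
    ⟨⟨_, dom_and_reg_of_strictAnti he hanti⟩,
      ⟨_, dom_and_reg_of_strictAnti he' hanti⟩⟩, ?_⟩
  rintro ⟨⟨e, hdom, he₀, hreg⟩, -⟩
  obtain rfl := eq_zero_of_dom_of_mem_Vth_pi hdom he₀
  have hv : ![1, -1, -1, 1] ∈ Vth coxeterElement π := by
    rw [Vth_coxeterElement_pi]
    exact ⟨1, rfl⟩
  have h₀₁ := hreg 0 1 rfl _ hv
  norm_num at h₀₁
end

section
/- (Injectivity part of the main theorem, group-theoretic core) Let G be a reductive group with Borel B = TU, x a quasi-convex element with lift ẋ normalizing the data, and write L = L_x, U_i = U_{Φ⁺_{x,i}}, U_{≤i} = U_{Φ⁺_{x,≤i}}, N = max n_x on Φ⁺ \ Φ(x). If y ∈ U_{≤N} and z₁, z₂ ∈ U₁L satisfy y ẋ z₁ y^{-1} = ẋ z₂, then y = 1 and z₁ = z₂. -/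
open Pointwise

/-- injectivity part of the main theorem, group-theoretic
core. `G` is an abstract group, `Ule i` models the filtration
`U_{Φ⁺_{x,≤i}}` of the unipotent radical attached to a quasi-convex element,
`L` models `L_x`, and `x` models the lift `ẋ`. If `y ∈ U_{≤N}` and
`z₁, z₂ ∈ U₁ L` satisfy `y ẋ z₁ y⁻¹ = ẋ z₂`, then `y = 1` and `z₁ = z₂`. -/
theorem steinberg_injectivity {G : Type*} [Group G]
    (Ule : ℕ → Subgroup G) (L : Subgroup G) (x : G) (N : ℕ)
    -- the filtration is increasing and starts at the trivial subgroup
    (hmono : Monotone Ule) (h0 : Ule 0 = ⊥)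
    -- `L` normalizes each step of the filtration
    (hnorm : ∀ i : ℕ, ∀ l ∈ L, ∀ u ∈ Ule i, l * u * l⁻¹ ∈ Ule i)
    -- conjugation by `ẋ⁻¹` sends `U_{≤i} \ U_{≤i-1}` into `U_{≤i+1} \ U_{≤i}`
    (hconj : ∀ i : ℕ, 1 ≤ i → ∀ u ∈ Ule i, u ∉ Ule (i - 1) →
      x⁻¹ * u * x ∈ Ule (i + 1) ∧ x⁻¹ * u * x ∉ Ule i)
    -- uniqueness of `U`-parts in products `u · l` (the multiplication maps
    -- `U_{≤k} × L → G` have disjoint fibers over the filtration)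
    (hdisj : ∀ i : ℕ, ∀ u ∈ Ule (i + 1), ∀ l ∈ L,
      u * l ∈ (Ule i : Set G) * (L : Set G) → u ∈ Ule i)
    (y : G) (hy : y ∈ Ule N)
    (z₁ : G) (hz₁ : z₁ ∈ (Ule 1 : Set G) * (L : Set G))
    (z₂ : G) (hz₂ : z₂ ∈ (Ule 1 : Set G) * (L : Set G))
    (heq : y * (x * z₁) * y⁻¹ = x * z₂) :
    y = 1 ∧ z₁ = z₂ := by
  classical
  rcases hz₁ with ⟨u₁, hu₁, l₁, hl₁, rfl⟩
  rcases hz₂ with ⟨u₂, hu₂, l₂, hl₂, rfl⟩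
  have hy1 : y = 1 := by
    by_contra hne
    have hex : ∃ i, y ∈ Ule i := ⟨N, hy⟩
    set i := Nat.find hex with hi
    have hyi : y ∈ Ule i := Nat.find_spec hex
    have hi1 : 1 ≤ i := by
      rcases Nat.eq_zero_or_pos i with h | h
      · exfalso; apply hne
        rw [h, h0, Subgroup.mem_bot] at hyi; exact hyi
      · exact h
    have hyni : y ∉ Ule (i - 1) := Nat.find_min hex (by omega)
    obtain ⟨hv1, hv2⟩ := hconj i hi1 y hyi hyni
    set v := x⁻¹ * y * x with hvdef
    -- key equation
    have key : (v * u₁) * l₁ = (u₂ * (l₂ * y * l₂⁻¹)) * l₂ := by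
      rw [hvdef]
      calc x⁻¹ * y * x * u₁ * l₁ = x⁻¹ * (y * (x * (u₁ * l₁)) * y⁻¹) * y := by group
        _ = u₂ * (l₂ * y * l₂⁻¹) * l₂ := by rw [heq]; group
    have hmem : (v * u₁) * l₁ ∈ (Ule i : Set G) * (L : Set G) := by
      rw [key]
      exact ⟨u₂ * (l₂ * y * l₂⁻¹),
        mul_mem (hmono hi1 hu₂) (hnorm i l₂ hl₂ y hyi), l₂, hl₂, rfl⟩
    have hvu : v * u₁ ∈ Ule (i + 1) :=
      mul_mem hv1 (hmono (by omega : 1 ≤ i + 1) hu₁)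
    have := hdisj i (v * u₁) hvu l₁ hl₁ hmem
    exact hv2 (by simpa using mul_mem this (inv_mem (hmono hi1 hu₁)))
  subst hy1
  refine ⟨rfl, ?_⟩
  have : x * (u₁ * l₁) = x * (u₂ * l₂) := by simpa using heq
  exact mul_left_cancel this
end
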